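/- For every matrix F in M_3(ℝ) with det(F) > 0, the distance from F to SO(3) in Frobenius norm satisfies dist(F, SO(3)) ≤ |F^T F − I_3|_F. -/

import Mathlib

/-!
Since `det F > 0`, the polar decomposition `F = R U` with `U = |F| = √(FᵀF)` has `R ∈ SO(3)`,
so `dist(F, SO(3)) ≤ |F - R|_F = |U - I|_F`. For `U ⪰ 0` the inequality `|U - I|_F ≤ |U² - I|_F`
is the matrix form of `(λ - 1)² ≤ (λ² - 1)²` for `λ ≥ 0`: the difference
`(U² - I)² - (U - I)² = (U - I)² (U² + 2U)` is a product of positive semidefinite matrices,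
hence has nonnegative trace.
-/

open Matrix

/-- Frobenius norm of a 3×3 real matrix. -/
noncomputable def frob (F : Matrix (Fin 3) (Fin 3) ℝ) : ℝ :=
  Real.sqrt (∑ i, ∑ j, (F i j) ^ 2)

/-- The special orthogonal group SO(3) as a set of matrices. -/
def SO3 : Set (Matrix (Fin 3) (Fin 3) ℝ) :=
  {R | Rᵀ * R = 1 ∧ R.det = 1}

/-- Frobenius distance from a matrix to SO(3). -/
noncomputable def distSO3 (F : Matrix (Fin 3) (Fin 3) ℝ) : ℝ :=
  sInf ((fun R => frob (F - R)) '' SO3)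

open scoped MatrixOrder

namespace Matrix

variable {n : Type*} [Fintype n] [DecidableEq n]

lemma PosSemidef.trace_mul_nonneg {A B : Matrix n n ℝ} (hA : A.PosSemidef) (hB : B.PosSemidef) :
    0 ≤ (A * B).trace := by
  set C := CFC.sqrt B
  have hC : Cᴴ = C := (CFC.sqrt_nonneg B).posSemidef.1.eq
  have hB_eq : B = C * C := (CFC.sqrt_mul_sqrt_self B hB.nonneg).symm
  calc (0 : ℝ) ≤ (Cᴴ * A * C).trace := (hA.conjTranspose_mul_mul_same C).trace_nonneg
    _ = (A * B).trace := by rw [hC, hB_eq, mul_assoc, trace_mul_comm, mul_assoc]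

lemma PosSemidef.trace_sub_one_sq_le {U : Matrix n n ℝ} (hU : U.PosSemidef) :
    ((U - 1) ^ 2).trace ≤ ((U ^ 2 - 1) ^ 2).trace := by
  have hU' : Uᴴ = U := hU.1.eq
  have expand : (U ^ 2 - 1) ^ 2 = (U - 1) ^ 2 + (U - 1) ^ 2 * (U ^ 2 + 2 • U) := by
    noncomm_ring
  have hsq : ((U - 1) ^ 2).PosSemidef := by
    have := posSemidef_conjTranspose_mul_self (U - 1)
    rwa [conjTranspose_sub, hU', conjTranspose_one, ← pow_two] at this
  have hU2 : (U ^ 2 + 2 • U).PosSemidef := (hU.pow 2).add (hU.smul zero_le_two)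
  rw [expand, trace_add]
  linarith [hsq.trace_mul_nonneg hU2]

lemma transpose_mul_self_eq_abs_mul_abs (F : Matrix n n ℝ) :
    Fᵀ * F = CFC.abs F * CFC.abs F := by
  rw [CFC.abs_mul_abs, star_eq_conjTranspose, conjTranspose_eq_transpose_of_trivial]

lemma exists_polar_decomposition_of_det_pos {F : Matrix n n ℝ} (hF : 0 < F.det) :
    ∃ R : Matrix n n ℝ, Rᵀ * R = 1 ∧ R.det = 1 ∧ F = R * CFC.abs F := by
  set U := CFC.abs F
  have hU : U.PosSemidef := (CFC.abs_nonneg F).posSemidef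
  have hUU : Fᵀ * F = U * U := transpose_mul_self_eq_abs_mul_abs F
  have hdetU : 0 < U.det := by
    refine hU.det_nonneg.lt_of_ne' fun h => hF.ne' ?_
    have := congrArg det hUU
    rw [det_mul, det_mul, det_transpose, h, mul_zero, mul_self_eq_zero] at this
    exact this
  have hUinv : U⁻¹ * U = 1 := nonsing_inv_mul U hdetU.ne'.isUnit
  have hR : (F * U⁻¹)ᵀ * (F * U⁻¹) = 1 := by
    rw [transpose_mul, transpose_nonsing_inv, ← conjTranspose_eq_transpose_of_trivial, hU.1.eq]
    calc U⁻¹ * Fᵀ * (F * U⁻¹) = U⁻¹ * (Fᵀ * F) * U⁻¹ := by simp only [mul_assoc]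
      _ = 1 := by rw [hUU, ← mul_assoc, hUinv, one_mul, mul_nonsing_inv U hdetU.ne'.isUnit]
  have hdet_sq : (F * U⁻¹).det * (F * U⁻¹).det = 1 := by
    simpa only [det_mul, det_transpose, det_one] using congrArg det hR
  have hdet_pos : 0 < (F * U⁻¹).det := by
    rw [det_mul, det_nonsing_inv, Ring.inverse_eq_inv]
    positivity
  refine ⟨F * U⁻¹, hR, ?_, by rw [mul_assoc, hUinv, mul_one]⟩
  exact (mul_self_eq_one_iff.mp hdet_sq).resolve_right (by linarith)

end Matrix

lemma frob_eq_sqrt_trace (M : Matrix (Fin 3) (Fin 3) ℝ) : frob M = √((Mᵀ * M).trace) := by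
  simp only [frob, trace, diag, mul_apply, transpose_apply, pow_two]
  rw [Finset.sum_comm]

lemma frob_eq_sqrt_trace_sq {M : Matrix (Fin 3) (Fin 3) ℝ} (hM : M.IsHermitian) :
    frob M = √((M ^ 2).trace) := by
  rw [frob_eq_sqrt_trace, ← conjTranspose_eq_transpose_of_trivial, hM.eq, pow_two]

lemma frob_mul_of_transpose_mul_self_eq_one {R : Matrix (Fin 3) (Fin 3) ℝ} (hR : Rᵀ * R = 1)
    (M : Matrix (Fin 3) (Fin 3) ℝ) : frob (R * M) = frob M := by
  rw [frob_eq_sqrt_trace, frob_eq_sqrt_trace, transpose_mul, mul_assoc, ← mul_assoc Rᵀ, hR,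
    one_mul]

lemma distSO3_le_frob_sub {R : Matrix (Fin 3) (Fin 3) ℝ} (hR : R ∈ SO3)
    (F : Matrix (Fin 3) (Fin 3) ℝ) : distSO3 F ≤ frob (F - R) :=
  csInf_le ⟨0, by rintro _ ⟨S, -, rfl⟩; exact Real.sqrt_nonneg _⟩ ⟨R, hR, rfl⟩

/-- For every `F` with positive determinant, `dist(F, SO(3)) ≤ |FᵀF − I|_F`. -/
theorem dist_SO3_le_frob_strain (F : Matrix (Fin 3) (Fin 3) ℝ) (hF : 0 < F.det) :
    distSO3 F ≤ frob (Fᵀ * F - 1) := by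
  obtain ⟨R, hR, hRdet, hFR⟩ := exists_polar_decomposition_of_det_pos hF
  set U := CFC.abs F
  have hU : U.PosSemidef := (CFC.abs_nonneg F).posSemidef
  calc distSO3 F ≤ frob (F - R) := distSO3_le_frob_sub ⟨hR, hRdet⟩ F
    _ = frob (U - 1) := by
      nth_rewrite 1 [hFR]
      rw [← mul_sub_one, frob_mul_of_transpose_mul_self_eq_one hR]
    _ = √(((U - 1) ^ 2).trace) := frob_eq_sqrt_trace_sq (hU.1.sub isHermitian_one)
    _ ≤ √(((U ^ 2 - 1) ^ 2).trace) := Real.sqrt_le_sqrt hU.trace_sub_one_sq_le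
    _ = frob (Fᵀ * F - 1) := by
      rw [transpose_mul_self_eq_abs_mul_abs, ← pow_two,
        frob_eq_sqrt_trace_sq ((hU.pow 2).1.sub isHermitian_one)]
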